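/- Let p = (p_i)_{i=1}^N and q = (q_i)_{i=1}^N be probability distributions with (1/2)∑_i |p_i − q_i| ≤ ε. Then the Shannon entropy satisfies |H(p) − H(q)| ≤ g(ε) + ε·log N. -/

import Mathlib

open scoped BigOperators ComplexOrder Classical

noncomputable section

/-- Shannon entropy of a finitely supported distribution, with `0 log 0 = 0`. -/
def shannonEntropy {ι : Type*} [Fintype ι] (p : ι → ℝ) : ℝ :=
  -∑ i, p i * Real.log (p i)

/-- A quantum state: positive semidefinite with unit trace. -/
def IsState {n : Type*} [Fintype n] (ρ : Matrix n n ℂ) : Prop :=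
  ρ.PosSemidef ∧ ρ.trace = 1

/-- A POVM: positive semidefinite elements summing to the identity. -/
def IsPOVM {ι n : Type*} [Fintype ι] [Fintype n] [DecidableEq n]
    (M : ι → Matrix n n ℂ) : Prop :=
  (∀ i, (M i).PosSemidef) ∧ ∑ i, M i = 1

/-- Observational entropy `S_M(ρ) = -∑ p_i log (p_i / V_i)`. -/
def obsEntropy {ι n : Type*} [Fintype ι] [Fintype n]
    (M : ι → Matrix n n ℂ) (ρ : Matrix n n ℂ) : ℝ :=
  -∑ i, ((M i * ρ).trace.re * Real.log ((M i * ρ).trace.re / (M i).trace.re))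

/-- The function `g(x) = -x log x + (1+x) log(1+x)`. -/
def gFun (x : ℝ) : ℝ := -(x * Real.log x) + (1 + x) * Real.log (1 + x)

/-- Trace norm of a square complex matrix. -/
def traceNorm {n : Type*} [Fintype n] [DecidableEq n] (X : Matrix n n ℂ) : ℝ :=
  (((Matrix.posSemidef_conjTranspose_mul_self X).1.eigenvectorUnitary : Matrix n n ℂ) *
    Matrix.diagonal (fun i => ((Real.sqrt
      ((Matrix.posSemidef_conjTranspose_mul_self X).1.eigenvalues i) : ℝ) : ℂ)) *
    (star ((Matrix.posSemidef_conjTranspose_mul_self X).1.eigenvectorUnitary :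
      Matrix n n ℂ))).trace.re

/-- Matrix logarithm of a Hermitian matrix via the spectral decomposition,
with the convention `log 0 = 0` on the kernel; junk value `0` on non-Hermitian input. -/
def matLog {n : Type*} [Fintype n] [DecidableEq n] (A : Matrix n n ℂ) : Matrix n n ℂ :=
  if hA : A.IsHermitian then
    (hA.eigenvectorUnitary : Matrix n n ℂ) *
      Matrix.diagonal (fun i => (Real.log (hA.eigenvalues i) : ℂ)) *
      (star (hA.eigenvectorUnitary : Matrix n n ℂ))
  else 0

/-- Von Neumann entropy `S(ρ) = -tr(ρ log ρ)`. -/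
def vnEntropy {n : Type*} [Fintype n] [DecidableEq n] (ρ : Matrix n n ℂ) : ℝ :=
  -((ρ * matLog ρ).trace.re)

/-- Quantum relative entropy, as an extended real number: `tr(μ (log μ - log ν))` when
`supp μ ⊆ supp ν` (both Hermitian), and `+∞` otherwise. -/
def qRelEntropy {n : Type*} [Fintype n] [DecidableEq n] (μ ν : Matrix n n ℂ) : EReal :=
  if μ.IsHermitian ∧ ν.IsHermitian ∧
      LinearMap.range (Matrix.toLin' μ) ≤ LinearMap.range (Matrix.toLin' ν) then
    (((μ * (matLog μ - matLog ν)).trace.re : ℝ) : EReal)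
  else ⊤

/-- Real-valued quantum relative entropy `tr(μ (log μ - log ν))` (meaningful when
`supp μ ⊆ supp ν`). -/
def qRelEntropyR {n : Type*} [Fintype n] [DecidableEq n] (μ ν : Matrix n n ℂ) : ℝ :=
  (μ * (matLog μ - matLog ν)).trace.re

/-!
Write `S(x) = ∑ negMulLog (x i)` for nonnegative vectors. If the total variation distance is
`δ ≤ ε`, then `p - q = u - v` with `u, v ≥ 0` of mass `ε` each (the positive and negative parts of
`p - q`, padded by `(ε - δ) q`), so `p + v = q + u`. Subadditivity of `negMulLog` and Jensen give
`S(q + u) ≤ S(q) - ε log ε + ε log N`, while concavity of `negMulLog` on the mixture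
`(p + v) / (1 + ε)` gives `S(p) ≤ S(p + v) + (1 + ε) log (1 + ε)`. Together,
`S(p) - S(q) ≤ g(ε) + ε log N`, and symmetrically.
-/

open Real Finset

namespace Real

variable {ι : Type*} [Fintype ι]

lemma mul_negMulLog_div (x : ℝ) {c : ℝ} (hc : c ≠ 0) :
    c * negMulLog (x / c) = negMulLog x + x * log c := by
  rw [div_eq_mul_inv, negMulLog_mul]
  simp only [negMulLog, log_inv]
  field_simp

lemma negMulLog_add_le {x y : ℝ} (hx : 0 ≤ x) (hy : 0 ≤ y) :
    negMulLog (x + y) ≤ negMulLog x + negMulLog y := by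
  rcases hx.eq_or_lt with rfl | hx
  · simp
  rcases hy.eq_or_lt with rfl | hy
  · simp
  have hlx : x * log x ≤ x * log (x + y) := by gcongr; linarith
  have hly : y * log y ≤ y * log (x + y) := by gcongr; linarith
  simp only [negMulLog]
  linarith

lemma negMulLog_add_add_mul_log_le {x y c d : ℝ} (hx : 0 ≤ x) (hy : 0 ≤ y)
    (hc : 0 < c) (hd : 0 < d) (hcd : c + d = 1) :
    negMulLog x + negMulLog y + x * log c + y * log d ≤ negMulLog (x + y) := by
  have h := concaveOn_negMulLog.2 (Set.mem_Ici.2 (div_nonneg hx hc.le))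
    (Set.mem_Ici.2 (div_nonneg hy hd.le)) hc.le hd.le hcd
  simp only [smul_eq_mul, mul_div_cancel₀ _ hc.ne', mul_div_cancel₀ _ hd.ne',
    mul_negMulLog_div _ hc.ne', mul_negMulLog_div _ hd.ne'] at h
  linarith

lemma negMulLog_sum_le_sum {u : ι → ℝ} (hu : ∀ i, 0 ≤ u i) :
    negMulLog (∑ i, u i) ≤ ∑ i, negMulLog (u i) :=
  le_sum_of_subadditive_on_pred negMulLog (0 ≤ ·) negMulLog_zero.le
    (fun _ _ => negMulLog_add_le) (fun _ _ => add_nonneg) u fun i _ => hu i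

lemma sum_negMulLog_le {u : ι → ℝ} (hu : ∀ i, 0 ≤ u i) :
    ∑ i, negMulLog (u i) ≤ negMulLog (∑ i, u i) + (∑ i, u i) * log (Fintype.card ι) := by
  rcases isEmpty_or_nonempty ι with hι | hι
  · simp
  have hN : (0 : ℝ) < Fintype.card ι := by exact_mod_cast Fintype.card_pos
  have jensen := concaveOn_negMulLog.le_map_sum (t := univ) (w := fun _ => (Fintype.card ι : ℝ)⁻¹)
    (fun _ _ => by positivity) (by simp [hN.ne']) (fun i _ => Set.mem_Ici.2 (hu i))
  calc ∑ i, negMulLog (u i)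
      = Fintype.card ι * ∑ i, (Fintype.card ι : ℝ)⁻¹ • negMulLog (u i) := by
        rw [← smul_sum, smul_eq_mul]; field_simp
    _ ≤ Fintype.card ι * negMulLog (∑ i, (Fintype.card ι : ℝ)⁻¹ • u i) := by gcongr
    _ = Fintype.card ι * negMulLog ((∑ i, u i) / Fintype.card ι) := by
        rw [← smul_sum, smul_eq_mul, inv_mul_eq_div]
    _ = _ := mul_negMulLog_div _ hN.ne'

end Real

section ShannonEntropy

variable {ι : Type*} [Fintype ι]

lemma shannonEntropy_eq_sum_negMulLog (p : ι → ℝ) :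
    shannonEntropy p = ∑ i, negMulLog (p i) := by
  simp [shannonEntropy, negMulLog_eq_neg]

lemma sum_negMulLog_add_le {q u : ι → ℝ} (hq : ∀ i, 0 ≤ q i) (hu : ∀ i, 0 ≤ u i) :
    ∑ i, negMulLog (q i + u i) ≤
      ∑ i, negMulLog (q i) + negMulLog (∑ i, u i) + (∑ i, u i) * log (Fintype.card ι) := by
  calc ∑ i, negMulLog (q i + u i) ≤ ∑ i, (negMulLog (q i) + negMulLog (u i)) :=
        sum_le_sum fun i _ => negMulLog_add_le (hq i) (hu i)
    _ ≤ _ := by rw [sum_add_distrib, add_assoc]; gcongr; exact sum_negMulLog_le hu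

lemma sum_negMulLog_le_sum_negMulLog_add {p v : ι → ℝ} (hp : ∀ i, 0 ≤ p i)
    (hv : ∀ i, 0 ≤ v i) (hp1 : ∑ i, p i = 1) :
    ∑ i, negMulLog (p i) ≤
      ∑ i, negMulLog (p i + v i) + (1 + ∑ i, v i) * log (1 + ∑ i, v i) := by
  rcases (sum_nonneg fun i _ => hv i).eq_or_lt with ht | ht
  · obtain rfl : v = 0 := (Fintype.sum_eq_zero_iff_of_nonneg hv).1 ht.symm
    simp
  set t := ∑ i, v i with ht_def
  have h1t : 0 < 1 + t := by linarith
  have mix := sum_le_sum fun i (_ : i ∈ univ) => negMulLog_add_add_mul_log_le (hp i) (hv i)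
    (c := 1 / (1 + t)) (d := t / (1 + t)) (by positivity) (by positivity) (by field_simp)
  simp only [sum_add_distrib, ← sum_mul, hp1, ← ht_def] at mix
  -- `negMulLog t ≤ S(v)` absorbs the `t * log t` contributed by `log d`
  have hvt := negMulLog_sum_le_sum hv
  rw [← ht_def, negMulLog] at hvt
  rw [log_div one_ne_zero h1t.ne', log_div ht.ne' h1t.ne', log_one] at mix
  linarith

lemma shannonEntropy_sub_le_of_add_eq_add {p q u v : ι → ℝ} (hp : ∀ i, 0 ≤ p i)
    (hq : ∀ i, 0 ≤ q i) (hu : ∀ i, 0 ≤ u i) (hv : ∀ i, 0 ≤ v i) (hp1 : ∑ i, p i = 1)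
    {t : ℝ} (hut : ∑ i, u i = t) (hvt : ∑ i, v i = t) (huv : ∀ i, p i + v i = q i + u i) :
    shannonEntropy p - shannonEntropy q ≤ gFun t + t * log (Fintype.card ι) := by
  have lower := sum_negMulLog_le_sum_negMulLog_add hp hv hp1
  have upper := sum_negMulLog_add_le hq hu
  simp only [huv, hut, hvt] at lower upper
  have hg : gFun t = negMulLog t + (1 + t) * log (1 + t) := by simp [gFun, negMulLog]
  rw [shannonEntropy_eq_sum_negMulLog, shannonEntropy_eq_sum_negMulLog, hg]
  linarith

lemma exists_add_eq_add_of_tv_le {p q : ι → ℝ} (hq : ∀ i, 0 ≤ q i) (hp1 : ∑ i, p i = 1)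
    (hq1 : ∑ i, q i = 1) {ε : ℝ} (hε : (1/2) * ∑ i, |p i - q i| ≤ ε) :
    ∃ u v : ι → ℝ, (∀ i, 0 ≤ u i) ∧ (∀ i, 0 ≤ v i) ∧ ∑ i, u i = ε ∧ ∑ i, v i = ε ∧
      ∀ i, p i + v i = q i + u i := by
  set δ := (1/2) * ∑ i, |p i - q i|
  have hpos_sub_neg : ∑ i, (p i - q i)⁺ - ∑ i, (p i - q i)⁻ = 0 := by
    rw [← sum_sub_distrib]
    simp only [posPart_sub_negPart]
    rw [sum_sub_distrib, hp1, hq1, sub_self]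
  have hpos_add_neg : ∑ i, (p i - q i)⁺ + ∑ i, (p i - q i)⁻ = 2 * δ := by
    simp [δ, ← sum_add_distrib, posPart_add_negPart]
  have hpad : 0 ≤ ε - δ := sub_nonneg.2 hε
  refine ⟨fun i => (p i - q i)⁺ + (ε - δ) * q i, fun i => (p i - q i)⁻ + (ε - δ) * q i,
    fun i => by have := hq i; positivity, fun i => by have := hq i; positivity, ?_, ?_, ?_⟩
  · rw [sum_add_distrib, ← mul_sum, hq1]; linarith
  · rw [sum_add_distrib, ← mul_sum, hq1]; linarith
  · intro i
    have := posPart_sub_negPart (p i - q i)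
    linarith

end ShannonEntropy

theorem shannonEntropy_continuity {N : ℕ} (p q : Fin N → ℝ)
    (hp0 : ∀ i, 0 ≤ p i) (hp1 : ∑ i, p i = 1)
    (hq0 : ∀ i, 0 ≤ q i) (hq1 : ∑ i, q i = 1)
    (ε : ℝ) (hε : (1/2) * ∑ i, |p i - q i| ≤ ε) :
    |shannonEntropy p - shannonEntropy q| ≤ gFun ε + ε * Real.log N := by
  obtain ⟨u, v, hu, hv, hu1, hv1, huv⟩ := exists_add_eq_add_of_tv_le hq0 hp1 hq1 hε
  have hcard : (Fintype.card (Fin N) : ℝ) = N := by simp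
  rw [abs_sub_le_iff, ← hcard]
  exact ⟨shannonEntropy_sub_le_of_add_eq_add hp0 hq0 hu hv hp1 hu1 hv1 huv,
    shannonEntropy_sub_le_of_add_eq_add hq0 hp0 hv hu hq1 hv1 hu1 fun i => (huv i).symm⟩
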